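/- Fix p with 1 < p ≤ 2. The function β(t, a) := (1/2) a^{p-2} t² is convex on the convex set {(t, a) ∈ ℝ² : t ≥ 0, a > 0}. -/

import Mathlib

/-!
Write `a ^ (p - 2) * t ^ 2 = t ^ 2 / a ^ (2 - p)`. Since `0 ≤ 2 - p ≤ 1`, the map `a ↦ a ^ (2 - p)`
is positive and concave, and the quadratic-over-linear function `(t, u) ↦ t² / u` is jointly convex
and nonincreasing in `u`; precomposing its second argument with a positive concave map keeps it
convex.
-/

open Set

/-- Weighted form of Sedrakyan's lemma; after clearing denominators it is `l m (t B - s A)² ≥ 0`. -/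
lemma sq_add_div_add_le {l m A B : ℝ} (t s : ℝ) (hl : 0 ≤ l) (hm : 0 ≤ m) (hA : 0 < A)
    (hB : 0 < B) : (l * t + m * s) ^ 2 / (l * A + m * B) ≤ l * (t ^ 2 / A) + m * (s ^ 2 / B) := by
  rcases (add_nonneg (mul_nonneg hl hA.le) (mul_nonneg hm hB.le)).eq_or_lt with h | h
  · rw [← h, div_zero]
    positivity
  have hrhs : l * (t ^ 2 / A) + m * (s ^ 2 / B) = (l * t ^ 2 * B + m * s ^ 2 * A) / (A * B) := by
    field_simp
  rw [hrhs, div_le_div_iff₀ h (mul_pos hA hB)]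
  nlinarith [mul_nonneg (mul_nonneg hl hm) (sq_nonneg (t * B - s * A))]

theorem ConcaveOn.convexOn_sq_div {E : Type*} [AddCommGroup E] [Module ℝ E] {s : Set E}
    {g : E → ℝ} (hg : ConcaveOn ℝ s g) (hg_pos : ∀ x ∈ s, 0 < g x) :
    ConvexOn ℝ (univ ×ˢ s) fun x : ℝ × E => x.1 ^ 2 / g x.2 := by
  refine ⟨convex_univ.prod hg.1, ?_⟩
  rintro ⟨t, a⟩ ⟨-, ha⟩ ⟨r, b⟩ ⟨-, hb⟩ l m hl hm hlm
  have hcombo_pos : 0 < l * g a + m * g b :=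
    convex_Ioi (0 : ℝ) (hg_pos a ha) (hg_pos b hb) hl hm hlm
  calc (l * t + m * r) ^ 2 / g (l • a + m • b)
      ≤ (l * t + m * r) ^ 2 / (l * g a + m * g b) :=
        div_le_div_of_nonneg_left (sq_nonneg _) hcombo_pos (hg.2 ha hb hl hm hlm)
    _ ≤ l * (t ^ 2 / g a) + m * (r ^ 2 / g b) :=
        sq_add_div_add_le t r hl hm (hg_pos a ha) (hg_pos b hb)

theorem stmt_6 (p : ℝ) (hp1 : 1 < p) (hp2 : p ≤ 2) :
    ConvexOn ℝ {x : ℝ × ℝ | 0 ≤ x.1 ∧ 0 < x.2}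
      (fun x : ℝ × ℝ => (1 / 2) * x.2 ^ (p - 2) * x.1 ^ 2) := by
  have hconcave : ConcaveOn ℝ (Ioi 0) fun a : ℝ => a ^ (2 - p) :=
    (Real.concaveOn_rpow (by linarith) (by linarith)).subset Ioi_subset_Ici_self (convex_Ioi 0)
  have hconvex := (hconcave.convexOn_sq_div fun a ha => Real.rpow_pos_of_pos ha _).smul
    (by norm_num : (0 : ℝ) ≤ 1 / 2)
  refine (hconvex.subset (fun x hx => ⟨mem_univ _, hx.2⟩)
    ((convex_Ici 0).prod (convex_Ioi 0))).congr ?_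
  rintro ⟨t, a⟩ ⟨-, ha⟩
  have hexp : p - 2 = -(2 - p) := by ring
  simp only [smul_eq_mul, hexp, Real.rpow_neg ha.le]
  ring
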